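/- arXiv:1612.05427 — 4 statements merged into one kernel-verified Lean document; each statement's English description precedes it below -/
import Mathlib

section
/- Energy of the stationary solutions (Proposition 1.2 (ii)). One has E(0,0) = 0, and for every d ∈ (−1,1) and every unit vector Ω ∈ ℝ^m (|Ω| = 1), E(κ(d,·)Ω, 0) = E(κ(0,·), 0), where κ(0,·) is the constant function y ↦ κ0; moreover this common value E(κ(0,·),0) is strictly positive. -/
open MeasureTheory Real Set

/-- `κ₀ = (2(p+1)/(p-1)²)^{1/(p-1)}` -/
noncomputable def kappa0 (p : ℝ) : ℝ := (2 * (p + 1) / (p - 1) ^ 2) ^ (1 / (p - 1))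

/-- `κ(d,y) = κ₀ (1-d²)^{1/(p-1)} (1+dy)^{-2/(p-1)}` -/
noncomputable def kappa (p d y : ℝ) : ℝ :=
  kappa0 p * (1 - d ^ 2) ^ (1 / (p - 1)) * (1 + d * y) ^ (-(2 / (p - 1)))

/-- the weight `ρ(y) = (1-y²)^{2/(p-1)}` -/
noncomputable def rho (p y : ℝ) : ℝ := (1 - y ^ 2) ^ (2 / (p - 1))

/-- The energy `E(w,v)` of a pair of functions `(-1,1) → V`. -/
noncomputable def energyE {V : Type*} [NormedAddCommGroup V] [NormedSpace ℝ V]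
    (p : ℝ) (w v : ℝ → V) : ℝ :=
  ∫ y in Set.Ioo (-1 : ℝ) 1,
    ((1 : ℝ) / 2 * ‖v y‖ ^ 2 + 1 / 2 * ‖deriv w y‖ ^ 2 * (1 - y ^ 2)
      + (p + 1) / (p - 1) ^ 2 * ‖w y‖ ^ 2 - ‖w y‖ ^ (p + 1) / (p + 1)) * rho p y

/- ### Auxiliary lemmas -/

lemma kappa0_pos {p : ℝ} (hp : 1 < p) : 0 < kappa0 p := by
  have h1 : (0:ℝ) < p - 1 := by linarith
  exact Real.rpow_pos_of_pos (by positivity) _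

lemma kappa0_rpow {p : ℝ} (hp : 1 < p) : kappa0 p ^ (p - 1) = 2 * (p + 1) / (p - 1) ^ 2 := by
  have h1 : (0:ℝ) < p - 1 := by linarith
  have hB : (0:ℝ) ≤ 2 * (p + 1) / (p - 1) ^ 2 := by positivity
  rw [kappa0, ← Real.rpow_mul hB, one_div, inv_mul_cancel₀ h1.ne', Real.rpow_one]

lemma kappa0_rpow_succ {p : ℝ} (hp : 1 < p) :
    kappa0 p ^ (p + 1) = kappa0 p ^ 2 * (2 * (p + 1) / (p - 1) ^ 2) := by
  have h0 := kappa0_pos hp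
  have h : kappa0 p ^ (p + 1) = kappa0 p ^ ((2:ℝ) + (p - 1)) := by ring_nf
  rw [h, Real.rpow_add h0, kappa0_rpow hp, Real.rpow_two, sq]

lemma rho_cont {p : ℝ} (hp : 1 < p) : Continuous (rho p) := by
  have h1 : (0:ℝ) < p - 1 := by linarith
  have h : (0:ℝ) ≤ 2 / (p - 1) := by positivity
  exact (Real.continuous_rpow_const h).comp (continuous_const.sub (continuous_pow 2))

lemma rho_pos {p : ℝ} {y : ℝ} (hy : y ∈ Set.Ioo (-1:ℝ) 1) : 0 < rho p y := by
  apply Real.rpow_pos_of_pos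
  nlinarith [hy.1, hy.2]

lemma integral_Ioo_eq_interval (f : ℝ → ℝ) :
    ∫ y in Set.Ioo (-1:ℝ) 1, f y = ∫ y in (-1:ℝ)..1, f y := by
  rw [intervalIntegral.integral_of_le (by norm_num : (-1:ℝ) ≤ 1),
    MeasureTheory.integral_Ioc_eq_integral_Ioo]

lemma int_rho_pos {p : ℝ} (hp : 1 < p) : 0 < ∫ y in Set.Ioo (-1:ℝ) 1, rho p y := by
  rw [integral_Ioo_eq_interval]
  apply intervalIntegral.intervalIntegral_pos_of_pos_on
  · exact (rho_cont hp).intervalIntegrable _ _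
  · exact fun x hx => rho_pos hx
  · norm_num

lemma energy_zero' {p : ℝ} (hp : 1 < p) {V : Type*} [NormedAddCommGroup V] [NormedSpace ℝ V] :
    energyE p (0 : ℝ → V) (0 : ℝ → V) = 0 := by
  have hp1 : p + 1 ≠ 0 := by linarith
  unfold energyE
  have h : ∀ y : ℝ, ((1 : ℝ) / 2 * ‖(0 : ℝ → V) y‖ ^ 2
      + 1 / 2 * ‖deriv (0 : ℝ → V) y‖ ^ 2 * (1 - y ^ 2)
      + (p + 1) / (p - 1) ^ 2 * ‖(0 : ℝ → V) y‖ ^ 2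
      - ‖(0 : ℝ → V) y‖ ^ (p + 1) / (p + 1)) * rho p y = 0 := by
    intro y
    have hd : deriv (0 : ℝ → V) = fun _ => (0:V) := by
      funext x
      exact deriv_const x 0
    simp [hd, Real.zero_rpow hp1]
  simp only [h, integral_zero]

lemma energy_const {p : ℝ} (hp : 1 < p) :
    energyE p (fun _ : ℝ => kappa0 p) (0 : ℝ → ℝ)
      = kappa0 p ^ 2 / (p - 1) * ∫ y in Set.Ioo (-1:ℝ) 1, rho p y := by
  have h0 := kappa0_pos hp
  have hp1 : (0:ℝ) < p - 1 := by linarith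
  have hpp : (0:ℝ) < p + 1 := by linarith
  unfold energyE
  rw [← MeasureTheory.integral_const_mul]
  apply setIntegral_congr_fun measurableSet_Ioo
  intro y _
  have hd : deriv (fun _ : ℝ => kappa0 p) = fun _ => (0:ℝ) := by
    funext x; exact deriv_const x _
  have hn : ‖kappa0 p‖ = kappa0 p := by rw [Real.norm_eq_abs, abs_of_pos h0]
  simp only [hd, hn, Pi.zero_apply, norm_zero]
  rw [kappa0_rpow_succ hp]
  field_simp
  ring

lemma hU_all {d : ℝ} (hd : d ∈ Set.Ioo (-1:ℝ) 1) : ∀ y ∈ Set.Icc (-1:ℝ) 1, 0 < 1 + d * y := by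
  intro y hy
  nlinarith [hy.1, hy.2, hd.1, hd.2, sq_nonneg (d + y), sq_nonneg (d - y), sq_nonneg (1 + d*y)]

lemma kappa_hasDeriv {p d : ℝ} (hd : d ∈ Set.Ioo (-1:ℝ) 1) {y : ℝ} (hy : 0 < 1 + d * y) :
    HasDerivAt (fun z => kappa p d z)
      (kappa0 p * (1 - d^2) ^ (1/(p-1)) * (-(2/(p-1)) * (1 + d*y) ^ (-(2/(p-1)) - 1) * d)) y := by
  have h1 : HasDerivAt (fun z : ℝ => 1 + d * z) d y := by
    simpa using ((hasDerivAt_id y).const_mul d).const_add 1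
  have h2 := h1.rpow_const (p := -(2/(p-1))) (Or.inl hy.ne')
  have h3 := h2.const_mul (kappa0 p * (1 - d^2) ^ (1/(p-1)))
  have h4 : (fun z => kappa p d z)
      = fun z => kappa0 p * (1 - d^2) ^ (1/(p-1)) * (1 + d*z) ^ (-(2/(p-1))) := by
    funext z; rw [kappa]
  rw [h4]
  exact h3.congr_deriv (by ring)

lemma phi_hasDeriv {d : ℝ} (hd : d ∈ Set.Ioo (-1:ℝ) 1) {y : ℝ} (hy : 0 < 1 + d * y) :
    HasDerivAt (fun z => (z + d) / (1 + d * z)) ((1 - d^2) / (1 + d*y)^2) y := by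
  have ha : HasDerivAt (fun z : ℝ => z + d) 1 y := (hasDerivAt_id y).add_const d
  have hb : HasDerivAt (fun z : ℝ => 1 + d * z) d y := by
    simpa using ((hasDerivAt_id y).const_mul d).const_add 1
  have := ha.div hb hy.ne'
  exact this.congr_deriv (by ring)

lemma H_hasDeriv {p d : ℝ} (hp : 1 < p) {y : ℝ} (hy : 0 < 1 + d * y) (b : ℝ) :
    HasDerivAt (fun z => b * ((1 - z^2) ^ ((2/(p-1)) + 1) * (1 + d*z) ^ (-(4/(p-1)) - 1)))
      (b * ((((2/(p-1)) + 1) * (1 - y^2) ^ (2/(p-1)) * (-(2*y))) * (1 + d*y) ^ (-(4/(p-1)) - 1)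
        + (1 - y^2) ^ ((2/(p-1)) + 1) * (((-(4/(p-1)) - 1) * (1 + d*y) ^ (-(4/(p-1)) - 2)) * d))) y := by
  have hp1 : (0:ℝ) < p - 1 := by linarith
  have hx1 : HasDerivAt (fun z : ℝ => 1 - z^2) (-(2*y)) y := by
    simpa using (hasDerivAt_pow 2 y).const_sub 1
  have hf : HasDerivAt (fun z : ℝ => (1 - z^2) ^ ((2/(p-1)) + 1))
      (((2/(p-1)) + 1) * (1 - y^2) ^ (2/(p-1)) * (-(2*y))) y := by
    have h := hx1.rpow_const (p := (2/(p-1)) + 1)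
      (Or.inr (le_add_of_nonneg_left (by positivity)))
    rw [show (2/(p-1)) + 1 - 1 = 2/(p-1) by ring] at h
    convert h using 1
    ring
  have hb : HasDerivAt (fun z : ℝ => 1 + d * z) d y := by
    simpa using ((hasDerivAt_id y).const_mul d).const_add 1
  have hg : HasDerivAt (fun z : ℝ => (1 + d*z) ^ (-(4/(p-1)) - 1))
      ((-(4/(p-1)) - 1) * (1 + d*y) ^ (-(4/(p-1)) - 2) * d) y := by
    have h := hb.rpow_const (p := -(4/(p-1)) - 1) (Or.inl hy.ne')
    rw [show -(4/(p-1)) - 1 - 1 = -(4/(p-1)) - 2 by ring] at h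
    convert h using 1
    ring
  have := (hf.mul hg).const_mul b
  exact this

lemma key_identity {p : ℝ} (hp : 1 < p) {d y : ℝ} (hd : d ∈ Set.Ioo (-1:ℝ) 1)
    (hy : y ∈ Set.Ioo (-1:ℝ) 1) :
    (1/2 * (kappa0 p * (1 - d^2) ^ (1/(p-1)) * (-(2/(p-1)) * (1 + d*y) ^ (-(2/(p-1)) - 1) * d))^2
        * (1 - y^2)
      + (p+1)/(p-1)^2 * (kappa p d y)^2 - (kappa p d y) ^ (p+1) / (p+1)) * rho p y
    = (1 - d^2)/(1 + d*y)^2 * (kappa0 p^2/(p-1) * rho p ((y + d)/(1 + d*y)))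
      + (-(kappa0 p^2 * (1 - d^2) ^ (2/(p-1)) * d * (1/(p-1)))) *
        ((((2/(p-1)) + 1) * (1 - y^2) ^ (2/(p-1)) * (-(2*y))) * (1 + d*y) ^ (-(4/(p-1)) - 1)
         + (1 - y^2) ^ ((2/(p-1)) + 1) * (((-(4/(p-1)) - 1) * (1 + d*y) ^ (-(4/(p-1)) - 2)) * d)) := by
  obtain ⟨hd1, hd2⟩ := hd
  obtain ⟨hy1, hy2⟩ := hy
  have hp1 : (0:ℝ) < p - 1 := by linarith
  have hpp : (0:ℝ) < p + 1 := by linarith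
  have hX : (0:ℝ) < 1 - y^2 := by nlinarith
  have hD : (0:ℝ) < 1 - d^2 := by nlinarith
  have hU : (0:ℝ) < 1 + d*y := by nlinarith
  have hk0 := kappa0_pos hp
  set R : ℝ := (1 + d*y) ^ (4/(p-1)) with hR
  set Dp : ℝ := (1 - d^2) ^ (2/(p-1)) with hDp
  set P : ℝ := (1 - y^2) ^ (2/(p-1)) with hP
  have hRpos : 0 < R := Real.rpow_pos_of_pos hU _
  have b1 : ((1 - d^2) ^ (1/(p-1)))^2 = Dp := by
    rw [sq, ← Real.rpow_add hD, hDp]; ring_nf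
  have bneg : ∀ s : ℝ, (1 + d*y) ^ (-s) = 1 / (1 + d*y) ^ s := by
    intro s; rw [Real.rpow_neg hU.le, one_div]
  have hU2 : (1 + d*y) ^ ((2:ℝ)) = (1 + d*y)^2 := by
    rw [show ((2:ℝ)) = ((2:ℕ):ℝ) by norm_num, Real.rpow_natCast]
  have hU1 : (1 + d*y) ^ ((1:ℝ)) = (1 + d*y) := Real.rpow_one _
  have b2 : ((1 + d*y) ^ (-(2/(p-1)) - 1))^2 = 1 / (R * (1 + d*y)^2) := by
    rw [sq, ← Real.rpow_add hU]
    rw [show -(2/(p-1)) - 1 + (-(2/(p-1)) - 1) = -(4/(p-1) + 2) by ring]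
    rw [bneg, Real.rpow_add hU, hU2]
  have b3 : ((1 + d*y) ^ (-(2/(p-1))))^2 = 1 / R := by
    rw [sq, ← Real.rpow_add hU]
    rw [show -(2/(p-1)) + -(2/(p-1)) = -(4/(p-1)) by ring]
    rw [bneg]
  have b7 : (1 + d*y) ^ (-(4/(p-1)) - 1) = 1 / (R * (1 + d*y)) := by
    rw [show -(4/(p-1)) - 1 = -(4/(p-1) + 1) by ring, bneg, Real.rpow_add hU, hU1]
  have b8 : (1 + d*y) ^ (-(4/(p-1)) - 2) = 1 / (R * (1 + d*y)^2) := by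
    rw [show -(4/(p-1)) - 2 = -(4/(p-1) + 2) by ring, bneg, Real.rpow_add hU, hU2]
  have b9 : (1 - y^2) ^ ((2/(p-1)) + 1) = P * (1 - y^2) := by
    rw [Real.rpow_add hX, Real.rpow_one]
  have b4 : (kappa p d y)^2 = kappa0 p^2 * Dp * (1 / R) := by
    rw [kappa, mul_pow, mul_pow, b1, b3]
  have b5 : (kappa p d y) ^ (p+1)
      = kappa0 p^2 * (2*(p+1)/(p-1)^2) * (Dp * (1 - d^2)) * (1 / (R * (1 + d*y)^2)) := by
    have hDe : (0:ℝ) ≤ (1 - d^2) ^ (1/(p-1)) := (Real.rpow_pos_of_pos hD _).le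
    have hUe : (0:ℝ) ≤ (1 + d*y) ^ (-(2/(p-1))) := (Real.rpow_pos_of_pos hU _).le
    rw [kappa, Real.mul_rpow (by positivity) hUe, Real.mul_rpow hk0.le hDe]
    rw [← Real.rpow_mul hD.le, ← Real.rpow_mul hU.le]
    rw [show (1/(p-1)) * (p+1) = 2/(p-1) + 1 by field_simp; ring]
    rw [show (-(2/(p-1))) * (p+1) = -(4/(p-1)) - 2 by field_simp; ring]
    rw [Real.rpow_add hD, Real.rpow_one, b8, kappa0_rpow_succ hp]
  have b6 : rho p ((y + d)/(1 + d*y)) = Dp * P / R := by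
    have hphi : 1 - ((y + d)/(1 + d*y))^2 = (1 - d^2) * (1 - y^2) / (1 + d*y)^2 := by
      rw [div_pow, one_sub_div (pow_ne_zero 2 hU.ne')]; ring
    rw [rho, hphi, Real.div_rpow (by positivity) (by positivity),
      Real.mul_rpow hD.le hX.le]
    congr 1
    rw [← Real.rpow_natCast (1 + d*y) 2, ← Real.rpow_mul hU.le]
    rw [show ((2:ℕ):ℝ) * (2/(p-1)) = 4/(p-1) by push_cast; ring]
  simp only [mul_pow]
  rw [b1, b2, b4, b5, b6, b7, b8, b9]
  rw [show rho p y = P from rfl]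
  have hRne : R ≠ 0 := hRpos.ne'
  field_simp
  ring

lemma energy_boost {p : ℝ} (hp : 1 < p) {V : Type*} [NormedAddCommGroup V] [NormedSpace ℝ V]
    {d : ℝ} (hd : d ∈ Set.Ioo (-1:ℝ) 1) {Ω : V} (hΩ : ‖Ω‖ = 1) :
    energyE p (fun y => kappa p d y • Ω) (0 : ℝ → V)
      = kappa0 p ^ 2 / (p - 1) * ∫ y in Set.Ioo (-1:ℝ) 1, rho p y := by
  have hp1 : (0:ℝ) < p - 1 := by linarith
  have hD : (0:ℝ) < 1 - d^2 := by nlinarith [hd.1, hd.2]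
  have hk0 := kappa0_pos hp
  have hUI : Set.uIcc (-1:ℝ) 1 = Set.Icc (-1:ℝ) 1 := Set.uIcc_of_le (by norm_num)
  set c : ℝ := kappa0 p ^ 2 / (p - 1) with hc
  set b : ℝ := -(kappa0 p^2 * (1 - d^2) ^ (2/(p-1)) * d * (1/(p-1))) with hb
  set f1 : ℝ → ℝ := fun y => (1 - d^2)/(1 + d*y)^2 * (c * rho p ((y + d)/(1 + d*y))) with hf1
  set f2 : ℝ → ℝ := fun y => b *
    ((((2/(p-1)) + 1) * (1 - y^2) ^ (2/(p-1)) * (-(2*y))) * (1 + d*y) ^ (-(4/(p-1)) - 1)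
     + (1 - y^2) ^ ((2/(p-1)) + 1) * (((-(4/(p-1)) - 1) * (1 + d*y) ^ (-(4/(p-1)) - 2)) * d))
    with hf2
  have step1 : energyE p (fun y => kappa p d y • Ω) (0 : ℝ → V)
      = ∫ y in Set.Ioo (-1:ℝ) 1, (f1 y + f2 y) := by
    unfold energyE
    apply setIntegral_congr_fun measurableSet_Ioo
    intro y hy
    have hU : 0 < 1 + d*y := hU_all hd y (Set.Ioo_subset_Icc_self hy)
    have hder : deriv (fun z => kappa p d z • Ω) y
        = (kappa0 p * (1 - d^2) ^ (1/(p-1)) * (-(2/(p-1)) * (1 + d*y) ^ (-(2/(p-1)) - 1) * d)) • Ω :=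
      ((kappa_hasDeriv hd hU).smul_const Ω).deriv
    have hkpos : 0 < kappa p d y := by
      rw [kappa]
      exact mul_pos (mul_pos hk0 (Real.rpow_pos_of_pos hD _)) (Real.rpow_pos_of_pos hU _)
    dsimp only
    rw [hder, norm_smul, norm_smul, hΩ, mul_one, mul_one,
      Real.norm_eq_abs, Real.norm_eq_abs, sq_abs, sq_abs]
    rw [abs_of_pos hkpos]
    simp only [Pi.zero_apply, norm_zero, hf1, hf2]
    have hk := key_identity hp hd hy
    rw [hc]
    linear_combination hk
  have hcont2 : ContinuousOn f2 (Set.uIcc (-1:ℝ) 1) := by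
    rw [hUI]
    have hXc : Continuous (fun y : ℝ => (1 - y^2) ^ (2/(p-1))) := rho_cont hp
    have hXc2 : Continuous (fun y : ℝ => (1 - y^2) ^ ((2/(p-1)) + 1)) := by
      apply Continuous.rpow_const (continuous_const.sub (continuous_pow 2))
      intro x
      right
      positivity
    have hUc : ∀ s : ℝ, ContinuousOn (fun y : ℝ => (1 + d*y) ^ (s : ℝ)) (Set.Icc (-1:ℝ) 1) := by
      intro s
      apply ContinuousOn.rpow_const (by fun_prop)
      intro x hx
      exact Or.inl (hU_all hd x hx).ne'
    apply ContinuousOn.mul continuousOn_const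
    apply ContinuousOn.add
    · exact (((continuousOn_const.mul hXc.continuousOn).mul (by fun_prop)).mul (hUc _))
    · exact hXc2.continuousOn.mul ((continuousOn_const.mul (hUc _)).mul continuousOn_const)
  have hcont1 : ContinuousOn f1 (Set.uIcc (-1:ℝ) 1) := by
    rw [hUI]
    have hUne : ∀ x ∈ Set.Icc (-1:ℝ) 1, ((1 + d*x)^2 : ℝ) ≠ 0 :=
      fun x hx => pow_ne_zero _ (hU_all hd x hx).ne'
    apply ContinuousOn.mul (continuousOn_const.div (by fun_prop) hUne)
    apply ContinuousOn.mul continuousOn_const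
    apply (rho_cont hp).comp_continuousOn
    exact ContinuousOn.div (by fun_prop) (by fun_prop)
      (fun x hx => (hU_all hd x hx).ne')
  have hint1 : IntervalIntegrable f1 volume (-1:ℝ) 1 := hcont1.intervalIntegrable
  have hint2 : IntervalIntegrable f2 volume (-1:ℝ) 1 := hcont2.intervalIntegrable
  have hzero : ∫ y in (-1:ℝ)..1, f2 y = 0 := by
    have hH : ∀ y ∈ Set.uIcc (-1:ℝ) 1,
        HasDerivAt (fun z => b * ((1 - z^2) ^ ((2/(p-1)) + 1) * (1 + d*z) ^ (-(4/(p-1)) - 1)))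
          (f2 y) y :=
      fun y hy => H_hasDeriv hp (hU_all hd y (hUI ▸ hy)) b
    rw [intervalIntegral.integral_eq_sub_of_hasDerivAt hH hint2]
    have hne : (2/(p-1)) + 1 ≠ 0 := by positivity
    norm_num [Real.zero_rpow hne]
  have hsub : ∫ y in (-1:ℝ)..1, f1 y = ∫ z in (-1:ℝ)..1, c * rho p z := by
    have hφd : ∀ x ∈ Set.uIcc (-1:ℝ) 1,
        HasDerivAt (fun z => (z + d)/(1 + d*z)) ((1 - d^2)/(1 + d*x)^2) x :=
      fun x hx => phi_hasDeriv hd (hU_all hd x (hUI ▸ hx))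
    have hφdc : ContinuousOn (fun x : ℝ => (1 - d^2)/(1 + d*x)^2) (Set.uIcc (-1:ℝ) 1) := by
      rw [hUI]
      exact continuousOn_const.div (by fun_prop)
        (fun x hx => pow_ne_zero _ (hU_all hd x hx).ne')
    have hgc : Continuous (fun z : ℝ => c * rho p z) := continuous_const.mul (rho_cont hp)
    have h := intervalIntegral.integral_comp_smul_deriv hφd hφdc hgc
    have e1 : ((-1:ℝ) + d)/(1 + d*(-1)) = -1 := by
      rw [div_eq_iff (by nlinarith [hd.2] : (0:ℝ) < 1 + d*(-1)).ne']
      ring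
    have e2 : ((1:ℝ) + d)/(1 + d*1) = 1 := by
      rw [div_eq_iff (by nlinarith [hd.1] : (0:ℝ) < 1 + d*1).ne']
      ring
    rw [e1, e2] at h
    rw [← h]
    apply intervalIntegral.integral_congr
    intro x hx
    simp only [hf1, smul_eq_mul, Function.comp]
  rw [step1, integral_Ioo_eq_interval, intervalIntegral.integral_add hint1 hint2, hzero,
    add_zero, hsub, intervalIntegral.integral_const_mul, ← integral_Ioo_eq_interval]

/-- **Energy of the stationary solutions** (Proposition 1.2 (ii)). -/
theorem energy_of_stationary (p : ℝ) (hp : 1 < p) (m : ℕ) (hm : 2 ≤ m) :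
    energyE p (0 : ℝ → EuclideanSpace ℝ (Fin m)) (0 : ℝ → EuclideanSpace ℝ (Fin m)) = 0 ∧
    0 < energyE p (fun _ : ℝ => kappa0 p) (0 : ℝ → ℝ) ∧
    ∀ d ∈ Set.Ioo (-1 : ℝ) 1, ∀ Ω : EuclideanSpace ℝ (Fin m), ‖Ω‖ = 1 →
      energyE p (fun y => kappa p d y • Ω) (0 : ℝ → EuclideanSpace ℝ (Fin m))
        = energyE p (fun _ : ℝ => kappa0 p) (0 : ℝ → ℝ) := by
  have hp1 : (0:ℝ) < p - 1 := by linarith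
  refine ⟨energy_zero' hp, ?_, ?_⟩
  · rw [energy_const hp]
    have := int_rho_pos hp
    have hk0 := kappa0_pos hp
    positivity
  · intro d hd Ω hΩ
    rw [energy_boost hp hd hΩ, energy_const hp]
end

section
/- Action of A_j on e_1 (Lemma 3.2 (i)). For every j ∈ {2,…,m} and every θ = (θ_2,…,θ_m) ∈ ℝ^{m−1}, one has A_j(θ) e_1 = ( ∏_{k=j+1}^{m} cos θ_k ) e_j, where the empty product (when j = m) equals 1. -/
open Real

/-- The `m × m` rotation matrix rotating the plane spanned by the basis vectors
with indices `0` and `i` (the paper's `e_1` and `e_{i+1}`) by an angle `a`,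
leaving all other directions invariant. -/
noncomputable def rotMat (m : ℕ) (i : ℕ) (a : ℝ) : Matrix (Fin m) (Fin m) ℝ :=
  Matrix.of fun k l =>
    if (k : ℕ) = 0 ∧ (l : ℕ) = 0 then Real.cos a
    else if (k : ℕ) = 0 ∧ (l : ℕ) = i then -Real.sin a
    else if (k : ℕ) = i ∧ (l : ℕ) = 0 then Real.sin a
    else if (k : ℕ) = i ∧ (l : ℕ) = i then Real.cos a
    else if k = l then 1 else 0

/-- `R_θ = R_2(θ_2) R_3(θ_3) ⋯ R_m(θ_m)`.  Here the paper's basis vector `e_j`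
(`j ∈ {1,…,m}`) is the Lean basis vector with index `j - 1 : Fin m`, so the
paper's rotation `R_j(θ_j)` of the `(e_1, e_j)`-plane is `rotMat m (j-1) (θ j)`.
Only the values `θ 2, …, θ m` of `θ : ℕ → ℝ` are relevant. -/
noncomputable def Rtheta (m : ℕ) (θ : ℕ → ℝ) : Matrix (Fin m) (Fin m) ℝ :=
  ((List.range (m - 1)).map fun k => rotMat m (k + 1) (θ (k + 2))).prod

/-- The entrywise partial derivative `∂R_θ/∂θ_j`. -/
noncomputable def dRtheta (m : ℕ) (θ : ℕ → ℝ) (j : ℕ) : Matrix (Fin m) (Fin m) ℝ :=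
  Matrix.of fun k l => deriv (fun a => Rtheta m (Function.update θ j a) k l) (θ j)

/-- `A_j(θ) = R_θ⁻¹ ∂R_θ/∂θ_j`. -/
noncomputable def Amat (m : ℕ) (θ : ℕ → ℝ) (j : ℕ) : Matrix (Fin m) (Fin m) ℝ :=
  (Rtheta m θ)⁻¹ * dRtheta m θ j


/-!
Write `R_θ = P R_j(θ_j) Q` with `Q = R_{j+1} ⋯ R_m`. A plane rotation
`R(a) = 1 + (cos a - 1) D + sin a J` has derivative `R(a) J`, where `J` is the generator
`e_1 ↦ e_j, e_j ↦ -e_1`; hence `∂R_θ/∂θ_j = P R_j J Q`. The rotations in `Q` fix `e_j`, keep the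
`e_j`-coordinate of `Q e_1` zero and scale its `e_1`-coordinate to `c = ∏_{k>j} cos θ_k`, so
`J Q e_1 = c e_j = Q (c e_j)`. Therefore `∂R_θ/∂θ_j e_1 = R_θ (c e_j)`, i.e. `A_j e_1 = c e_j`.
-/

open Matrix

section PlaneRotation

variable {n : Type*} [DecidableEq n] (x y : n)

noncomputable def planeProj : Matrix n n ℝ := single x x 1 + single y y 1

noncomputable def planeGen : Matrix n n ℝ := single y x 1 - single x y 1

noncomputable def planeRot (a : ℝ) : Matrix n n ℝ :=
  1 + (cos a - 1) • planeProj x y + sin a • planeGen x y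

variable {x y} [Fintype n]

section Algebra

variable (hxy : x ≠ y)
include hxy

theorem planeProj_mul_planeProj : planeProj x y * planeProj x y = planeProj x y := by
  simp [planeProj, add_mul, mul_add, hxy, hxy.symm]

theorem planeProj_mul_planeGen : planeProj x y * planeGen x y = planeGen x y := by
  simp [planeProj, planeGen, add_mul, mul_sub, hxy, hxy.symm]

theorem planeGen_mul_planeProj : planeGen x y * planeProj x y = planeGen x y := by
  simp [planeProj, planeGen, sub_mul, mul_add, hxy, hxy.symm]
  abel

theorem planeGen_mul_planeGen : planeGen x y * planeGen x y = -planeProj x y := by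
  simp [planeProj, planeGen, sub_mul, mul_sub, hxy, hxy.symm]
  abel

theorem planeRot_mul_planeRot (a b : ℝ) :
    planeRot x y a * planeRot x y b = planeRot x y (a + b) := by
  simp only [planeRot, add_mul, mul_add, mul_smul_comm, smul_mul_assoc, one_mul, mul_one,
    planeProj_mul_planeProj hxy, planeProj_mul_planeGen hxy, planeGen_mul_planeProj hxy,
    planeGen_mul_planeGen hxy, cos_add, sin_add]
  module

theorem planeRot_mul_planeGen (a : ℝ) :
    planeRot x y a * planeGen x y = -sin a • planeProj x y + cos a • planeGen x y := by
  simp only [planeRot, add_mul, smul_mul_assoc, one_mul,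
    planeProj_mul_planeGen hxy, planeGen_mul_planeGen hxy]
  module

theorem isUnit_planeRot (a : ℝ) : IsUnit (planeRot x y a) := by
  have hinv (b : ℝ) : planeRot x y b * planeRot x y (-b) = 1 := by
    rw [planeRot_mul_planeRot hxy, add_neg_cancel, planeRot, cos_zero, sin_zero]
    simp
  exact ⟨⟨_, _, hinv a, by simpa using hinv (-a)⟩, rfl⟩

theorem hasDerivAt_mul_planeRot_mul_apply (P Q : Matrix n n ℝ) (k l : n) (a : ℝ) :
    HasDerivAt (fun b => (P * planeRot x y b * Q) k l)
      ((P * (planeRot x y a * planeGen x y) * Q) k l) a := by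
  have hexpand : (fun b => (P * planeRot x y b * Q) k l) = fun b =>
      (P * Q) k l + (cos b - 1) * (P * planeProj x y * Q) k l
        + sin b * (P * planeGen x y * Q) k l := by
    funext b
    simp [planeRot, mul_add, add_mul]
  rw [hexpand, planeRot_mul_planeGen hxy]
  refine ((((hasDerivAt_cos a).sub_const 1).mul_const ((P * planeProj x y * Q) k l)).const_add
    ((P * Q) k l)).fun_add ((hasDerivAt_sin a).mul_const ((P * planeGen x y * Q) k l))
    |>.congr_deriv ?_
  simp [add_mul, mul_add]

end Algebra

theorem planeProj_mulVec (v : n → ℝ) :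
    planeProj x y *ᵥ v = Pi.single x (v x) + Pi.single y (v y) := by
  simp [planeProj, add_mulVec, single_mulVec]
  rfl

theorem planeGen_mulVec (v : n → ℝ) :
    planeGen x y *ᵥ v = Pi.single y (v x) - Pi.single x (v y) := by
  simp [planeGen, sub_mulVec, single_mulVec]
  rfl

theorem planeRot_mulVec (a : ℝ) (v : n → ℝ) :
    planeRot x y a *ᵥ v = v + (cos a - 1) • (Pi.single x (v x) + Pi.single y (v y))
      + sin a • (Pi.single y (v x) - Pi.single x (v y)) := by
  simp only [planeRot, add_mulVec, smul_mulVec, one_mulVec, planeProj_mulVec, planeGen_mulVec]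

theorem planeRot_mulVec_of_apply_eq_zero (a : ℝ) {v : n → ℝ} (hx : v x = 0) (hy : v y = 0) :
    planeRot x y a *ᵥ v = v := by
  simp [planeRot_mulVec, hx, hy]

theorem planeRot_mulVec_apply_left (hxy : x ≠ y) (a : ℝ) (v : n → ℝ) :
    (planeRot x y a *ᵥ v) x = cos a * v x - sin a * v y := by
  simp [planeRot_mulVec, hxy]
  ring

theorem planeRot_mulVec_apply_of_ne (a : ℝ) (v : n → ℝ) {z : n} (hx : z ≠ x)
    (hy : z ≠ y) :
    (planeRot x y a *ᵥ v) z = v z := by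
  simp [planeRot_mulVec, hx, hy]

end PlaneRotation

theorem rotMat_eq_planeRot {m i : ℕ} (hi : 0 < i) (him : i < m) (a : ℝ) :
    rotMat m i a = planeRot (⟨0, hi.trans him⟩ : Fin m) ⟨i, him⟩ a := by
  ext k l
  simp only [rotMat, planeRot, planeProj, planeGen, of_apply, Matrix.add_apply,
    Matrix.smul_apply, one_apply, Matrix.sub_apply, single_apply, Fin.ext_iff, smul_eq_mul]
  split_ifs <;> first | (exfalso; omega) | ring

noncomputable def rotProd (m : ℕ) (l : List ℕ) (φ : ℕ → ℝ) :
    Matrix (Fin m) (Fin m) ℝ :=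
  (l.map fun i => rotMat m i (φ i)).prod

section RotProd

variable {m : ℕ} {l : List ℕ} (φ : ℕ → ℝ)

@[simp] theorem rotProd_nil : rotProd m [] φ = 1 := rfl

@[simp] theorem rotProd_cons (i : ℕ) (l : List ℕ) :
    rotProd m (i :: l) φ = rotMat m i (φ i) * rotProd m l φ := rfl

theorem rotProd_append (l₁ l₂ : List ℕ) :
    rotProd m (l₁ ++ l₂) φ = rotProd m l₁ φ * rotProd m l₂ φ := by
  simp [rotProd]

theorem rotProd_congr {ψ : ℕ → ℝ} (h : ∀ i ∈ l, φ i = ψ i) :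
    rotProd m l φ = rotProd m l ψ := by
  simp only [rotProd, List.map_congr_left fun i hi => congrArg (rotMat m i) (h i hi)]

variable (hl : ∀ i ∈ l, 0 < i ∧ i < m)
include hl

theorem isUnit_rotProd : IsUnit (rotProd m l φ) := by
  refine List.prod_isUnit fun M hM => ?_
  obtain ⟨i, hi, rfl⟩ := List.mem_map.mp hM
  rw [rotMat_eq_planeRot (hl i hi).1 (hl i hi).2]
  exact isUnit_planeRot (by simpa [Fin.ext_iff] using (hl i hi).1.ne) _

theorem rotProd_mulVec_single_of_notMem {z : Fin m} (hz : (z : ℕ) ∉ 0 :: l) (c : ℝ) :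
    rotProd m l φ *ᵥ Pi.single z c = Pi.single z c := by
  induction l with
  | nil => rw [rotProd_nil, one_mulVec]
  | cons i l ih =>
    obtain ⟨hi0, him⟩ := hl i List.mem_cons_self
    rw [rotProd_cons, ← mulVec_mulVec, ih (fun k hk => hl k (List.mem_cons_of_mem _ hk))
      (by grind), rotMat_eq_planeRot hi0 him]
    exact planeRot_mulVec_of_apply_eq_zero _ (by grind [Fin.ext_iff])
      (by grind [Fin.ext_iff])

theorem rotProd_mulVec_apply_of_notMem (v : Fin m → ℝ) {z : Fin m} (hz : (z : ℕ) ∉ 0 :: l) :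
    (rotProd m l φ *ᵥ v) z = v z := by
  induction l with
  | nil => simp
  | cons i l ih =>
    obtain ⟨hi0, him⟩ := hl i List.mem_cons_self
    rw [rotProd_cons, ← mulVec_mulVec, rotMat_eq_planeRot hi0 him,
      planeRot_mulVec_apply_of_ne _ _ (by grind [Fin.ext_iff]) (by grind [Fin.ext_iff])]
    exact ih (fun k hk => hl k (List.mem_cons_of_mem _ hk)) (by grind)

theorem rotProd_mulVec_single_zero_apply_zero (hnd : l.Nodup) (h0 : 0 < m) :
    (rotProd m l φ *ᵥ Pi.single ⟨0, h0⟩ 1) ⟨0, h0⟩ =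
      (l.map fun i => cos (φ i)).prod := by
  induction l with
  | nil => simp
  | cons i l ih =>
    obtain ⟨hi0, him⟩ := hl i List.mem_cons_self
    have hl' : ∀ k ∈ l, 0 < k ∧ k < m := fun k hk => hl k (List.mem_cons_of_mem _ hk)
    have hvanish : (rotProd m l φ *ᵥ Pi.single ⟨0, h0⟩ 1) ⟨i, him⟩ = 0 := by
      rw [rotProd_mulVec_apply_of_notMem φ hl' _ (by grind)]
      simp [Fin.ext_iff, hi0.ne']
    rw [rotProd_cons, ← mulVec_mulVec, rotMat_eq_planeRot hi0 him,
      planeRot_mulVec_apply_left (by simp [Fin.ext_iff, hi0.ne]), hvanish, ih hl' hnd.of_cons]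
    simp

end RotProd

theorem List.prod_map_range'_eq_prod_Icc {M : Type*} [CommMonoid M] (f : ℕ → M) (j m : ℕ) :
    ((List.range' j (m - j)).map fun i => f (i + 1)).prod =
      ∏ k ∈ Finset.Icc (j + 1) m, f k := by
  rw [← Finset.Ico_add_one_right_eq_Icc, ← Finset.prod_Ico_add', Nat.Ico_eq_range']
  rfl

theorem Rtheta_eq_rotProd (m : ℕ) (θ : ℕ → ℝ) :
    Rtheta m θ = rotProd m (List.range' 1 (m - 1)) (fun i => θ (i + 1)) := by
  rw [Rtheta, rotProd, List.range'_eq_map_range, List.map_map]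
  congr 2
  funext k
  rw [Function.comp_apply, add_comm 1 k, add_assoc]

theorem isUnit_Rtheta (m : ℕ) (θ : ℕ → ℝ) : IsUnit (Rtheta m θ) := by
  rw [Rtheta_eq_rotProd]
  exact isUnit_rotProd _ fun i hi => by simp at hi; omega

section Factor

variable {m j : ℕ} (θ : ℕ → ℝ) (hj2 : 2 ≤ j) (hjm : j ≤ m)
include hj2 hjm

theorem Rtheta_update_eq (a : ℝ) :
    Rtheta m (Function.update θ j a) =
      rotProd m (List.range' 1 (j - 2)) (fun i => θ (i + 1)) * rotMat m (j - 1) a *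
        rotProd m (List.range' j (m - j)) (fun i => θ (i + 1)) := by
  have hsplit :
      List.range' 1 (m - 1) = List.range' 1 (j - 2) ++ (j - 1) :: List.range' j (m - j) := by
    rw [show m - 1 = (j - 2) + (m - j + 1) by omega, ← List.range'_append_1, List.range'_succ,
      show 1 + (j - 2) = j - 1 by omega, Nat.sub_add_cancel (by omega : 1 ≤ j)]
  have hfar (i : ℕ) (hi : i + 1 ≠ j) : Function.update θ j a (i + 1) = θ (i + 1) :=
    Function.update_of_ne hi _ _
  rw [Rtheta_eq_rotProd, hsplit, rotProd_append, rotProd_cons,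
    Nat.sub_add_cancel (by omega : 1 ≤ j), Function.update_self, ← mul_assoc,
    rotProd_congr _ fun i hi => hfar i (by simp at hi; omega),
    rotProd_congr _ fun i hi => hfar i (by simp at hi; omega)]

theorem dRtheta_eq :
    dRtheta m θ j =
      rotProd m (List.range' 1 (j - 2)) (fun i => θ (i + 1)) *
        (rotMat m (j - 1) (θ j) *
          planeGen (⟨0, by omega⟩ : Fin m) ⟨j - 1, Nat.sub_one_lt_of_le (by omega) hjm⟩) *
        rotProd m (List.range' j (m - j)) (fun i => θ (i + 1)) := by
  ext k l
  simp only [dRtheta, of_apply, Rtheta_update_eq θ hj2 hjm,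
    rotMat_eq_planeRot (by omega : 0 < j - 1) (by omega : j - 1 < m)]
  exact (hasDerivAt_mul_planeRot_mul_apply (by simp [Fin.ext_iff]; omega) _ _ _ _ _).deriv

theorem planeGen_mulVec_rotProd_mulVec_single_zero :
    planeGen (⟨0, by omega⟩ : Fin m) ⟨j - 1, Nat.sub_one_lt_of_le (by omega) hjm⟩ *ᵥ
        (rotProd m (List.range' j (m - j)) (fun i => θ (i + 1)) *ᵥ
          Pi.single ⟨0, by omega⟩ 1) =
      Pi.single ⟨j - 1, Nat.sub_one_lt_of_le (by omega) hjm⟩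
        (∏ k ∈ Finset.Icc (j + 1) m, cos (θ k)) := by
  have hl : ∀ i ∈ List.range' j (m - j), 0 < i ∧ i < m := fun i hi => by simp at hi; omega
  rw [planeGen_mulVec, rotProd_mulVec_single_zero_apply_zero _ hl List.nodup_range',
    List.prod_map_range'_eq_prod_Icc (fun k => cos (θ k)),
    rotProd_mulVec_apply_of_notMem _ hl _ (by simp; omega)]
  simp [Pi.single_apply, Fin.ext_iff]
  omega

end Factor

/-- **Action of `A_j` on `e_1`** (Lemma 3.2 (i)): for `j ∈ {2,…,m}`,
`A_j(θ) e_1 = (∏_{k=j+1}^m cos θ_k) e_j`.  In Lean the paper's `e_1` is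
`Pi.single 0 1` and its `e_j` is `Pi.single ⟨j-1,_⟩ 1`. -/
theorem Amat_mulVec_e1 (m : ℕ) (hm : 2 ≤ m) (θ : ℕ → ℝ)
    (j : ℕ) (hj2 : 2 ≤ j) (hjm : j ≤ m) :
    (Amat m θ j).mulVec (Pi.single (⟨0, by omega⟩ : Fin m) 1) =
      (∏ k ∈ Finset.Icc (j + 1) m, Real.cos (θ k)) •
        (Pi.single (⟨j - 1, by omega⟩ : Fin m) (1 : ℝ) : Fin m → ℝ) := by
  set c := ∏ k ∈ Finset.Icc (j + 1) m, Real.cos (θ k)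
  have hfix : rotProd m (List.range' j (m - j)) (fun i => θ (i + 1)) *ᵥ
      Pi.single (⟨j - 1, by omega⟩ : Fin m) c = Pi.single ⟨j - 1, by omega⟩ c :=
    rotProd_mulVec_single_of_notMem _ (fun i hi => by simp at hi; omega) (by simp; omega) c
  have hR := Rtheta_update_eq θ hj2 hjm (θ j)
  rw [Function.update_eq_self] at hR
  have key : dRtheta m θ j *ᵥ Pi.single ⟨0, by omega⟩ 1 =
      Rtheta m θ *ᵥ Pi.single ⟨j - 1, by omega⟩ c := by
    rw [dRtheta_eq θ hj2 hjm, hR]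
    simp only [← mulVec_mulVec]
    rw [planeGen_mulVec_rotProd_mulVec_single_zero θ hj2 hjm, hfix]
  rw [Amat, ← mulVec_mulVec, key, mulVec_mulVec,
    nonsing_inv_mul _ ((isUnit_iff_isUnit_det _).mp (isUnit_Rtheta m θ)), one_mulVec,
    ← Pi.single_smul', smul_eq_mul, mul_one]
end

section
/- Finite induction identity (Lemma A.1). Let m ≥ 3, let i, j ∈ {2,…,m} with i ≤ j−1, and let θ_2,…,θ_m ∈ ℝ with cos θ_i ≠ 0. Then for every q ∈ {1,…,i−1}: Σ_{k=2}^{i−1} sin²θ_k · (φ_{k+1,m}/cos θ_i) · φ_{k+1,j−1} − cos θ_i · φ_{i+1,m} · φ_{i+1,j−1} = Σ_{k=2}^{q} sin²θ_k · (φ_{k+1,m}/cos θ_i) · φ_{k+1,j−1} − (φ_{q+1,m} · φ_{q+1,j−1}) / cos θ_i, where the sum on the right-hand side is empty (equal to zero) when q = 1. -/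
open Real

/-- `φ_{k,l} = ∏_{n=k}^l cos θ_n` when `k ≤ l`, and `φ_{k,l} = 1` when `k ≥ l+1`
(the product over the empty range). -/
noncomputable def phiProd (θ : ℕ → ℝ) (k l : ℕ) : ℝ :=
  ∏ n ∈ Finset.Icc k l, Real.cos (θ n)

/-!
With `w k = φ_{k,m} φ_{k,j-1}` one has `w k = cos² θ_k · w (k+1)` for `k ≤ i`, so
`sin² θ_k · w (k+1) = w (k+1) - w k` and the sum `∑_{k=2}^{q} sin² θ_k · w (k+1)` telescopes to
`w (q+1) - w 2`. Both sides of the identity therefore equal `-w 2 / cos θ_i`.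
-/

open Finset

lemma phiProd_eq_cos_mul (θ : ℕ → ℝ) {k l : ℕ} (hkl : k ≤ l) :
    phiProd θ k l = cos (θ k) * phiProd θ (k + 1) l := by
  rw [phiProd, phiProd, ← mul_prod_Ioc_eq_prod_Icc hkl, Icc_add_one_left_eq_Ioc]

lemma phiProd_mul_phiProd_eq_cos_sq_mul (θ : ℕ → ℝ) {k l l' : ℕ} (hl : k ≤ l) (hl' : k ≤ l') :
    phiProd θ k l * phiProd θ k l' =
      cos (θ k) ^ 2 * (phiProd θ (k + 1) l * phiProd θ (k + 1) l') := by
  rw [phiProd_eq_cos_mul θ hl, phiProd_eq_cos_mul θ hl']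
  ring

lemma sum_sin_sq_mul_eq_sub {θ w : ℕ → ℝ} {a b : ℕ} (hab : a ≤ b + 1)
    (hw : ∀ k ∈ Icc a b, w k = cos (θ k) ^ 2 * w (k + 1)) :
    ∑ k ∈ Icc a b, sin (θ k) ^ 2 * w (k + 1) = w (b + 1) - w a := by
  rw [← sum_Ico_sub w hab, Ico_add_one_right_eq_Icc]
  refine sum_congr rfl fun k hk => ?_
  rw [hw k hk, sin_sq]
  ring

theorem finite_induction_A1_general (m : ℕ) (θ : ℕ → ℝ) (i j : ℕ)
    (him : i ≤ m) (hij : i ≤ j - 1)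
    (hcos : Real.cos (θ i) ≠ 0) (q : ℕ) (hq1 : 1 ≤ q) (hqi : q ≤ i - 1) :
    (∑ k ∈ Finset.Icc 2 (i - 1),
        Real.sin (θ k) ^ 2 * (phiProd θ (k + 1) m / Real.cos (θ i)) * phiProd θ (k + 1) (j - 1))
      - Real.cos (θ i) * phiProd θ (i + 1) m * phiProd θ (i + 1) (j - 1)
    = (∑ k ∈ Finset.Icc 2 q,
        Real.sin (θ k) ^ 2 * (phiProd θ (k + 1) m / Real.cos (θ i)) * phiProd θ (k + 1) (j - 1))
      - phiProd θ (q + 1) m * phiProd θ (q + 1) (j - 1) / Real.cos (θ i) := by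
  set w : ℕ → ℝ := fun k => phiProd θ k m * phiProd θ k (j - 1)
  have hw : ∀ k ≤ i, w k = cos (θ k) ^ 2 * w (k + 1) := fun k hk =>
    phiProd_mul_phiProd_eq_cos_sq_mul θ (hk.trans him) (hk.trans hij)
  have hsum : ∀ b, 1 ≤ b → b ≤ i - 1 →
      ∑ k ∈ Icc 2 b, sin (θ k) ^ 2 * (phiProd θ (k + 1) m / cos (θ i)) * phiProd θ (k + 1) (j - 1)
        = (w (b + 1) - w 2) / cos (θ i) := fun b hb1 hbi => by
    have hk_le : ∀ k ∈ Icc 2 b, k ≤ i := fun k hk => by have := (mem_Icc.mp hk).2; omega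
    rw [← sum_sin_sq_mul_eq_sub (by omega) fun k hk => hw k (hk_le k hk), sum_div]
    exact sum_congr rfl fun k _ => by ring
  have hi : i - 1 + 1 = i := by omega
  rw [hsum (i - 1) (by omega) le_rfl, hsum q hq1 hqi, hi, hw i le_rfl]
  field_simp
  ring

/-- **Finite induction identity** (Lemma A.1). -/
theorem finite_induction_A1 (m : ℕ) (hm : 3 ≤ m) (θ : ℕ → ℝ) (i j : ℕ)
    (hi2 : 2 ≤ i) (him : i ≤ m) (hj2 : 2 ≤ j) (hjm : j ≤ m) (hij : i ≤ j - 1)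
    (hcos : Real.cos (θ i) ≠ 0) (q : ℕ) (hq1 : 1 ≤ q) (hqi : q ≤ i - 1) :
    (∑ k ∈ Finset.Icc 2 (i - 1),
        Real.sin (θ k) ^ 2 * (phiProd θ (k + 1) m / Real.cos (θ i)) * phiProd θ (k + 1) (j - 1))
      - Real.cos (θ i) * phiProd θ (i + 1) m * phiProd θ (i + 1) (j - 1)
    = (∑ k ∈ Finset.Icc 2 q,
        Real.sin (θ k) ^ 2 * (phiProd θ (k + 1) m / Real.cos (θ i)) * phiProd θ (k + 1) (j - 1))
      - phiProd θ (q + 1) m * phiProd θ (q + 1) (j - 1) / Real.cos (θ i) :=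
  finite_induction_A1_general m θ i j him hij hcos q hq1 hqi
end

section
/- Polar decomposition of the transformed ODE (system (2.10) in the proof of Proposition 1.2). Let I ⊆ ℝ be an open interval and let w̄ : I → ℝ^m be a C² solution of w̄'' + |w̄|^{p−1} w̄ − c0 w̄ = 0 on I, with c0 = 4/(p−1)², such that w̄(ξ) ≠ 0 for all ξ ∈ I. Set r(ξ) = |w̄(ξ)|, Ω(ξ) = w̄(ξ)/|w̄(ξ)|, and H(ξ) = |Ω'(ξ)|². Then for all ξ ∈ I: r''(ξ) − r(ξ) H(ξ) − c0 r(ξ) + r(ξ)^p = 0 and 4 r'(ξ) H(ξ) + r(ξ) H'(ξ) = 0. -/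
/-!
Since `w̄'' = k w̄` with the scalar `k = c₀ - |w̄|^{p-1}`, this is a central-force problem. Writing
`a = |w̄|²`, `b = ⟪w̄, w̄'⟫`, `c = |w̄'|²`, one has `a' = 2b`, `b' = c + k a`, `c' = 2 k b`, and
`H = (a c - b²) / a²`. The radial equation is `r'' = (b / r)' = r H + k r`. The "angular momentum"
`a c - b² = r⁴ H` has derivative `2bc + 2kab - 2b(c + ka) = 0`, and `(r⁴ H)' = r³ (4 r' H + r H')`.
-/

open Filter Topology
open scoped RealInnerProductSpace

section Pointwise

variable {E : Type*} [NormedAddCommGroup E] [InnerProductSpace ℝ E] {w w' : ℝ → E} {v : E}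
  {t : ℝ}

theorem HasDerivAt.norm (hw : HasDerivAt w v t) (h0 : w t ≠ 0) :
    HasDerivAt (fun s => ‖w s‖) (⟪w t, v⟫ / ‖w t‖) t := by
  have hr : 0 < ‖w t‖ := norm_pos_iff.mpr h0
  have h := hw.norm_sq.sqrt (by positivity)
  simp only [Real.sqrt_sq (norm_nonneg _)] at h
  convert h using 1
  field_simp

theorem HasDerivAt.inv_norm_smul (hw : HasDerivAt w v t) (h0 : w t ≠ 0) :
    HasDerivAt (fun s => ‖w s‖⁻¹ • w s) (‖w t‖⁻¹ • v - (⟪w t, v⟫ / ‖w t‖ ^ 3) • w t) t := by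
  have hr : 0 < ‖w t‖ := norm_pos_iff.mpr h0
  refine (((hw.norm h0).inv hr.ne').smul hw).congr_deriv ?_
  rw [sub_eq_add_neg, ← neg_smul]
  congr 2
  field_simp

theorem norm_inv_norm_smul_sub_sq (x v : E) (h0 : x ≠ 0) :
    ‖‖x‖⁻¹ • v - (⟪x, v⟫ / ‖x‖ ^ 3) • x‖ ^ 2 = (‖x‖ ^ 2 * ‖v‖ ^ 2 - ⟪x, v⟫ ^ 2) / ‖x‖ ^ 4 := by
  have hr : 0 < ‖x‖ := norm_pos_iff.mpr h0
  rw [← real_inner_self_eq_norm_sq (‖x‖⁻¹ • v - _)]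
  simp only [inner_sub_left, inner_sub_right, real_inner_smul_left, real_inner_smul_right]
  simp only [real_inner_comm v x, real_inner_self_eq_norm_sq]
  field_simp
  ring

theorem norm_deriv_inv_norm_smul_sq (hw : HasDerivAt w (deriv w t) t) (h0 : w t ≠ 0) :
    ‖deriv (fun s => ‖w s‖⁻¹ • w s) t‖ ^ 2
      = (‖w t‖ ^ 2 * ‖deriv w t‖ ^ 2 - ⟪w t, deriv w t⟫ ^ 2) / ‖w t‖ ^ 4 := by
  rw [(hw.inv_norm_smul h0).deriv, norm_inv_norm_smul_sub_sq _ _ h0]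

theorem HasDerivAt.norm_sq_mul_norm_sq_sub_inner_sq_of_central {k : ℝ}
    (hw : HasDerivAt w (w' t) t) (hw' : HasDerivAt w' (k • w t) t) :
    HasDerivAt (fun s => ‖w s‖ ^ 2 * ‖w' s‖ ^ 2 - ⟪w s, w' s⟫ ^ 2) 0 t := by
  refine ((hw.norm_sq.mul hw'.norm_sq).sub ((hw.inner ℝ hw').pow 2)).congr_deriv ?_
  simp only [real_inner_smul_right, real_inner_comm (w' t) (w t), real_inner_self_eq_norm_sq]
  ring

end Pointwise

section CentralForce

variable {E : Type*} [NormedAddCommGroup E] [InnerProductSpace ℝ E] {w : ℝ → E} {k : ℝ → ℝ}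
  {U : Set ℝ} {t : ℝ}

theorem deriv_deriv_norm_of_central (hU : IsOpen U) (hw : ∀ s ∈ U, HasDerivAt w (deriv w s) s)
    (hw' : ∀ s ∈ U, HasDerivAt (deriv w) (k s • w s) s) (h0 : ∀ s ∈ U, w s ≠ 0) (ht : t ∈ U) :
    deriv (deriv fun s => ‖w s‖) t
      = ‖w t‖ * ‖deriv (fun s => ‖w s‖⁻¹ • w s) t‖ ^ 2 + k t * ‖w t‖ := by
  have hr : 0 < ‖w t‖ := norm_pos_iff.mpr (h0 t ht)
  have hd := ((hw t ht).inner ℝ (hw' t ht)).div ((hw t ht).norm (h0 t ht)) hr.ne'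
  have hr' : deriv (fun s => ‖w s‖) =ᶠ[𝓝 t] fun s => ⟪w s, deriv w s⟫ / ‖w s‖ :=
    eventuallyEq_of_mem (hU.mem_nhds ht) fun s hs => ((hw s hs).norm (h0 s hs)).deriv
  rw [(hd.congr_of_eventuallyEq hr').deriv, norm_deriv_inv_norm_smul_sq (hw t ht) (h0 t ht)]
  simp only [real_inner_smul_right, real_inner_self_eq_norm_sq]
  field_simp
  ring

theorem four_mul_deriv_norm_mul_add_mul_deriv_eq_zero_of_central (hU : IsOpen U)
    (hw : ∀ s ∈ U, HasDerivAt w (deriv w s) s)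
    (hw' : ∀ s ∈ U, HasDerivAt (deriv w) (k s • w s) s) (h0 : ∀ s ∈ U, w s ≠ 0) (ht : t ∈ U) :
    4 * deriv (fun s => ‖w s‖) t * ‖deriv (fun s => ‖w s‖⁻¹ • w s) t‖ ^ 2
      + ‖w t‖ * deriv (fun s => ‖deriv (fun s' => ‖w s'‖⁻¹ • w s') s‖ ^ 2) t = 0 := by
  have hr : 0 < ‖w t‖ := norm_pos_iff.mpr (h0 t ht)
  have hd := ((hw t ht).norm_sq_mul_norm_sq_sub_inner_sq_of_central (hw' t ht)).div
    (((hw t ht).norm (h0 t ht)).pow 4) (pow_pos hr 4).ne'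
  have hH : (fun s => ‖deriv (fun s' => ‖w s'‖⁻¹ • w s') s‖ ^ 2) =ᶠ[𝓝 t]
      fun s => (‖w s‖ ^ 2 * ‖deriv w s‖ ^ 2 - ⟪w s, deriv w s⟫ ^ 2) / ‖w s‖ ^ 4 :=
    eventuallyEq_of_mem (hU.mem_nhds ht) fun s hs => norm_deriv_inv_norm_smul_sq (hw s hs) (h0 s hs)
  rw [(hd.congr_of_eventuallyEq hH).deriv, norm_deriv_inv_norm_smul_sq (hw t ht) (h0 t ht),
    ((hw t ht).norm (h0 t ht)).deriv]
  simp only [Pi.pow_apply]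
  field_simp
  ring

end CentralForce

theorem polar_decomposition_general (p : ℝ) (m : ℕ)
    (I : Set ℝ) (hIo : IsOpen I)
    (wb : ℝ → EuclideanSpace ℝ (Fin m))
    (hreg : ContDiffOn ℝ 2 wb I)
    (heq : ∀ ξ ∈ I,
      deriv (deriv wb) ξ + ‖wb ξ‖ ^ (p - 1) • wb ξ - (4 / (p - 1) ^ 2) • wb ξ = 0)
    (hne : ∀ ξ ∈ I, wb ξ ≠ 0) :
    (∀ ξ ∈ I,
      deriv (deriv (fun t => ‖wb t‖)) ξ
        - ‖wb ξ‖ * ‖deriv (fun t => ‖wb t‖⁻¹ • wb t) ξ‖ ^ 2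
        - (4 / (p - 1) ^ 2) * ‖wb ξ‖ + ‖wb ξ‖ ^ p = 0) ∧
    (∀ ξ ∈ I,
      4 * deriv (fun t => ‖wb t‖) ξ * ‖deriv (fun t => ‖wb t‖⁻¹ • wb t) ξ‖ ^ 2
        + ‖wb ξ‖ * deriv (fun t => ‖deriv (fun t' => ‖wb t'‖⁻¹ • wb t') t‖ ^ 2) ξ = 0) := by
  have hw : ∀ ξ ∈ I, HasDerivAt wb (deriv wb ξ) ξ := fun ξ hξ =>
    ((hreg.differentiableOn two_ne_zero).differentiableAt (hIo.mem_nhds hξ)).hasDerivAt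
  have hw' : ∀ ξ ∈ I, HasDerivAt (deriv wb) ((4 / (p - 1) ^ 2 - ‖wb ξ‖ ^ (p - 1)) • wb ξ) ξ := by
    intro ξ hξ
    have hd := (((hreg.deriv_of_isOpen hIo le_rfl).differentiableOn one_ne_zero).differentiableAt
      (hIo.mem_nhds hξ)).hasDerivAt
    refine hd.congr_deriv ?_
    rw [sub_smul, ← sub_eq_zero, ← heq ξ hξ]
    abel
  refine ⟨fun ξ hξ => ?_, fun ξ hξ =>
    four_mul_deriv_norm_mul_add_mul_deriv_eq_zero_of_central hIo hw hw' hne hξ⟩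
  have hpow : ‖wb ξ‖ ^ p = ‖wb ξ‖ ^ (p - 1) * ‖wb ξ‖ := by
    rw [← Real.rpow_add_one (norm_ne_zero_iff.mpr (hne ξ hξ)), sub_add_cancel]
  rw [deriv_deriv_norm_of_central hIo hw hw' hne hξ, hpow]
  ring

/-- **Polar decomposition of the transformed ODE** (system (2.10) in the proof of
Proposition 1.2).  On an open interval where the `C²` solution `w̄` of
`w̄'' + |w̄|^{p-1}w̄ - c₀ w̄ = 0` does not vanish, the modulus `r = |w̄|`, the
direction `Ω = w̄/|w̄|` and `H = |Ω'|²` satisfy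
`r'' - r H - c₀ r + rᵖ = 0` and `4 r' H + r H' = 0`. -/
theorem polar_decomposition (p : ℝ) (hp : 1 < p) (m : ℕ) (hm : 2 ≤ m)
    (I : Set ℝ) (hIo : IsOpen I) (hIc : I.OrdConnected)
    (wb : ℝ → EuclideanSpace ℝ (Fin m))
    (hreg : ContDiffOn ℝ 2 wb I)
    (heq : ∀ ξ ∈ I,
      deriv (deriv wb) ξ + ‖wb ξ‖ ^ (p - 1) • wb ξ - (4 / (p - 1) ^ 2) • wb ξ = 0)
    (hne : ∀ ξ ∈ I, wb ξ ≠ 0) :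
    (∀ ξ ∈ I,
      deriv (deriv (fun t => ‖wb t‖)) ξ
        - ‖wb ξ‖ * ‖deriv (fun t => ‖wb t‖⁻¹ • wb t) ξ‖ ^ 2
        - (4 / (p - 1) ^ 2) * ‖wb ξ‖ + ‖wb ξ‖ ^ p = 0) ∧
    (∀ ξ ∈ I,
      4 * deriv (fun t => ‖wb t‖) ξ * ‖deriv (fun t => ‖wb t‖⁻¹ • wb t) ξ‖ ^ 2
        + ‖wb ξ‖ * deriv (fun t => ‖deriv (fun t' => ‖wb t'‖⁻¹ • wb t') t‖ ^ 2) ξ = 0) :=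
  polar_decomposition_general p m I hIo wb hreg heq hne
end
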